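/- arXiv:2112.13760 — 2 statements merged into one kernel-verified Lean document; each statement's English description precedes it below -/
import Mathlib

section
/- For any integer Ψ with targeted value, any integer unsafe impact ξ⁻ < 0, any integer safe impact ξ⁺ > 0, and any decay parameters r_d ∈ (0,1) and Δ_d ≥ 1, there exist nonnegative integers x, r, y such that Ψ = ⌊x·ξ⁻ + y·ξ⁺·r_d^⌊r/Δ_d⌋⌋, constructed by choosing x as the smallest nonnegative integer with Ψ - x·ξ⁻ ≥ 0, r the smallest nonnegative integer with ξ⁺·r_d^⌊r/Δ_d⌋ ≤ 1, and y = ⌈(Ψ - x·ξ⁻)/(ξ⁺·r_d^⌊r/Δ_d⌋)⌉. -/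
open Filter Topology

theorem exists_nat_nonneg_sub_mul_of_neg (Ψ ξ : ℤ) (hξ : ξ < 0) : ∃ x : ℕ, 0 ≤ Ψ - x * ξ :=
  ⟨(-Ψ).toNat, by nlinarith [Int.self_le_toNat (-Ψ), Int.natCast_nonneg (-Ψ).toNat]⟩

theorem exists_nat_mul_pow_div_le_one (a q : ℝ) (hq : |q| < 1) {Δ : ℕ} (hΔ : 0 < Δ) :
    ∃ r : ℕ, a * q ^ (r / Δ) ≤ 1 := by
  have h : Tendsto (fun n : ℕ ↦ a * q ^ n) atTop (𝓝 0) := by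
    simpa using (tendsto_pow_atTop_nhds_zero_of_abs_lt_one hq).const_mul a
  obtain ⟨n, hn⟩ := (h.eventually (eventually_le_nhds zero_lt_one)).exists
  exact ⟨Δ * n, by rwa [Nat.mul_div_cancel_left n hΔ]⟩

/-- Rounding `m / c` up overshoots `m` by less than `c ≤ 1`, so rounding back down recovers `m`. -/
theorem Int.floor_ceil_div_mul {K : Type*} [Field K] [LinearOrder K] [IsStrictOrderedRing K]
    [FloorRing K] (m : ℤ) {c : K} (hc₀ : 0 < c) (hc₁ : c ≤ 1) : ⌊(⌈m / c⌉ : K) * c⌋ = m := by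
  rw [Int.floor_eq_iff]
  constructor
  · exact (div_le_iff₀ hc₀).mp (Int.le_ceil _)
  · calc (⌈m / c⌉ : K) * c < (m / c + 1) * c := by gcongr; exact Int.ceil_lt_add_one _
      _ = m + c := by field_simp
      _ ≤ m + 1 := by gcongr

/-- Any integer pSS `Ψ` can be formed as `⌊x·ξ⁻ + y·ξ⁺·r_d^⌊r/Δ_d⌋⌋` with
`x` the smallest nonnegative integer making `Ψ - x·ξ⁻ ≥ 0`, `r` the smallest
nonnegative integer with `ξ⁺·r_d^⌊r/Δ_d⌋ ≤ 1`, and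
`y = ⌈(Ψ - x·ξ⁻)/(ξ⁺·r_d^⌊r/Δ_d⌋)⌉`. -/
theorem pSS_event_combination_exists
    (Ψ ξm ξp : ℤ) (hξm : ξm < 0) (hξp : 0 < ξp)
    (r_d : ℝ) (hr₀ : 0 < r_d) (hr₁ : r_d < 1)
    (Δd : ℕ) (hΔ : 1 ≤ Δd) :
    ∃ x r y : ℕ,
      (0 ≤ Ψ - (x : ℤ) * ξm ∧ ∀ x' : ℕ, x' < x → ¬ (0 ≤ Ψ - (x' : ℤ) * ξm)) ∧
      ((ξp : ℝ) * r_d ^ (r / Δd) ≤ 1 ∧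
        ∀ r' : ℕ, r' < r → ¬ ((ξp : ℝ) * r_d ^ (r' / Δd) ≤ 1)) ∧
      (y : ℤ) = ⌈((Ψ - (x : ℤ) * ξm : ℤ) : ℝ) / ((ξp : ℝ) * r_d ^ (r / Δd))⌉ ∧
      Ψ = ⌊(x : ℝ) * (ξm : ℝ) + (y : ℝ) * (ξp : ℝ) * r_d ^ (r / Δd)⌋ := by
  have hx := exists_nat_nonneg_sub_mul_of_neg Ψ ξm hξm
  have hr := exists_nat_mul_pow_div_le_one ξp r_d (by rwa [abs_of_pos hr₀]) hΔ
  set x := Nat.find hx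
  set r := Nat.find hr
  set c : ℝ := ξp * r_d ^ (r / Δd)
  set m : ℤ := Ψ - x * ξm
  have hc₀ : 0 < c := by positivity
  have hy : 0 ≤ ⌈(m : ℝ) / c⌉ :=
    Int.ceil_nonneg (div_nonneg (by exact_mod_cast Nat.find_spec hx) hc₀.le)
  refine ⟨x, r, ⌈(m : ℝ) / c⌉.toNat, ⟨Nat.find_spec hx, fun _ ↦ Nat.find_min hx⟩,
    ⟨Nat.find_spec hr, fun _ ↦ Nat.find_min hr⟩, Int.toNat_of_nonneg hy, ?_⟩
  have hsplit : (x : ℝ) * ξm + (⌈(m : ℝ) / c⌉.toNat : ℝ) * ξp * r_d ^ (r / Δd)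
      = ((x * ξm : ℤ) : ℝ) + (⌈(m : ℝ) / c⌉ : ℝ) * c := by
    have hy' : (⌈(m : ℝ) / c⌉.toNat : ℝ) = ⌈(m : ℝ) / c⌉ := by
      exact_mod_cast Int.toNat_of_nonneg hy
    rw [hy']
    push_cast
    ring
  rw [hsplit, Int.floor_intCast_add, Int.floor_ceil_div_mul m hc₀ (Nat.find_spec hr)]
  ring
end

section
/- Given c ≥ 2 distinct negative unsafe-event impacts ξ⁻₁ > ξ⁻₂ > … > ξ⁻_c, any achievable pSS value Ψ can be formed by at least c distinct event combinations, one using each impact ξ⁻_k, so an adversary observing only Ψ cannot determine which unsafe event type occurred. -/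
/-!
Fix the number `x` of unsafe events of impact `ξ⁻_k` given by achievability, so that
`N = Ψ - x·ξ⁻_k ≥ 0`. Choosing the age `r = n·Δ_d` with `ξ⁺·r_d^n < 1`, each safe event
contributes a step `s ∈ (0, 1)`; the multiples `y·s` cannot jump over the unit interval
`[N, N + 1)`, so some `y` has `⌊y·s⌋ = N`.
-/

theorem exists_nat_floor_mul_eq {s : ℝ} (hs₀ : 0 < s) (hs₁ : s ≤ 1) {N : ℤ} (hN : 0 ≤ N) :
    ∃ y : ℕ, ⌊(y : ℝ) * s⌋ = N := by
  have hq : 0 ≤ (N : ℝ) / s := div_nonneg (by exact_mod_cast hN) hs₀.le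
  refine ⟨⌈(N : ℝ) / s⌉.toNat, ?_⟩
  rw [Int.floor_eq_iff, show ((⌈(N : ℝ) / s⌉.toNat : ℕ) : ℝ) = (⌈(N : ℝ) / s⌉ : ℝ) by
    exact_mod_cast Int.toNat_of_nonneg (Int.ceil_nonneg hq)]
  constructor
  · calc (N : ℝ) = (N : ℝ) / s * s := by field_simp
      _ ≤ ⌈(N : ℝ) / s⌉ * s := mul_le_mul_of_nonneg_right (Int.le_ceil _) hs₀.le
  · calc (⌈(N : ℝ) / s⌉ : ℝ) * s < ((N : ℝ) / s + 1) * s :=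
          mul_lt_mul_of_pos_right (Int.ceil_lt_add_one _) hs₀
      _ = N + s := by field_simp
      _ ≤ N + 1 := by linarith

theorem exists_mul_pow_lt_one {a r : ℝ} (ha : 0 < a) (hr : r < 1) : ∃ n : ℕ, a * r ^ n < 1 := by
  obtain ⟨n, hn⟩ := exists_pow_lt_of_lt_one (inv_pos.mpr ha) hr
  exact ⟨n, by rwa [← lt_inv_mul_iff₀ ha, mul_one]⟩

theorem pSS_formed_by_every_unsafe_impact_general
    (c : ℕ) (ξm : Fin c → ℤ)
    (ξp : ℤ) (hξp : 0 < ξp)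
    (r_d : ℝ) (hr₀ : 0 < r_d) (hr₁ : r_d < 1)
    (Δd : ℕ) (hΔ : 1 ≤ Δd)
    (Ψ : ℤ)
    (hach : ∀ k : Fin c, ∃ x : ℕ, 0 ≤ Ψ - (x : ℤ) * ξm k) :
    ∀ k : Fin c, ∃ x y r : ℕ,
      Ψ = ⌊(x : ℝ) * (ξm k : ℝ) + (y : ℝ) * (ξp : ℝ) * r_d ^ (r / Δd)⌋ := by
  intro k
  obtain ⟨x, hx⟩ := hach k
  have hξpR : (0 : ℝ) < ξp := by exact_mod_cast hξp
  obtain ⟨n, hn⟩ := exists_mul_pow_lt_one hξpR hr₁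
  obtain ⟨y, hy⟩ := exists_nat_floor_mul_eq (by positivity) hn.le hx
  refine ⟨x, y, n * Δd, ?_⟩
  rw [Nat.mul_div_cancel n hΔ, mul_assoc, show (x : ℝ) * (ξm k : ℝ) = ((x * ξm k : ℤ) : ℝ) by
    push_cast; ring, Int.floor_intCast_add, hy]
  ring

/-- Given `c ≥ 2` distinct negative unsafe-event impacts
`ξ⁻₁ > ξ⁻₂ > … > ξ⁻_c`, any achievable pSS value `Ψ` can be formed by at least
`c` distinct event combinations, one using each impact `ξ⁻_k`: for every `k`
there exist nonnegative integers `x, y, r` with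
`Ψ = ⌊x·ξ⁻_k + y·ξ⁺·r_d^⌊r/Δ_d⌋⌋`. Hence an adversary observing only `Ψ`
cannot determine which unsafe event type occurred. -/
theorem pSS_formed_by_every_unsafe_impact
    (c : ℕ) (hc : 2 ≤ c) (ξm : Fin c → ℤ)
    (hneg : ∀ k, ξm k < 0)
    (hdec : ∀ i j : Fin c, i < j → ξm j < ξm i)
    (ξp : ℤ) (hξp : 0 < ξp)
    (r_d : ℝ) (hr₀ : 0 < r_d) (hr₁ : r_d < 1)
    (Δd : ℕ) (hΔ : 1 ≤ Δd)
    (Ψ : ℤ)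
    (hach : ∀ k : Fin c, ∃ x : ℕ, 0 ≤ Ψ - (x : ℤ) * ξm k) :
    ∀ k : Fin c, ∃ x y r : ℕ,
      Ψ = ⌊(x : ℝ) * (ξm k : ℝ) + (y : ℝ) * (ξp : ℝ) * r_d ^ (r / Δd)⌋ :=
  pSS_formed_by_every_unsafe_impact_general c ξm ξp hξp r_d hr₀ hr₁ Δd hΔ Ψ hach
end
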